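/- arXiv:1204.0604 — 3 statements merged into one kernel-verified Lean document; each statement's English description precedes it below -/
import Mathlib

section
/- For all natural numbers n, q and m with m ≥ q+2, one has ∑_{r=n+q}^{m-2} (-1)^r · C(r-n+1, q+1) · C(m, r+2) = (-1)^{n+q} · C(m-q-2, n). -/
open Finset

private lemma partial_alt (m n : ℕ) :
    ∑ k ∈ range (n+1), (-1:ℤ)^k * ((m+1).choose k : ℤ) = (-1)^n * (m.choose n : ℤ) := by
  induction n with
  | zero => simp
  | succ n ih =>
    rw [sum_range_succ, ih, Nat.choose_succ_succ m n]
    push_cast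
    ring

private lemma tail_alt (m n N : ℕ) (h : m ≤ n + N) :
    ∑ j ∈ range N, (-1:ℤ)^j * ((m+1).choose (n+j+2) : ℤ) = (m.choose (n+1) : ℤ) := by
  have h1 := partial_alt m (n+1+N)
  rw [show n+1+N+1 = (n+2) + N by ring] at h1
  rw [sum_range_add] at h1
  have h2 : (m.choose (n+1+N) : ℤ) = 0 := by
    rw [Nat.choose_eq_zero_of_lt (by omega)]; simp
  rw [h2, mul_zero] at h1
  have h3 := partial_alt m (n+1)
  rw [h3] at h1
  have h4 : ∑ j ∈ range N, (-1:ℤ)^(n+2+j) * ((m+1).choose (n+2+j):ℤ)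
      = (-1)^(n+2) * ∑ j ∈ range N, (-1:ℤ)^j * ((m+1).choose (n+j+2):ℤ) := by
    rw [mul_sum]
    refine sum_congr rfl fun j _ => ?_
    rw [show n+2+j = n+j+2 by ring, pow_add]
    ring
  rw [h4] at h1
  have h5 : (-1:ℤ)^(n+2) ≠ 0 := pow_ne_zero _ (by norm_num)
  have h6 : (-1:ℤ)^(n+2) * (∑ j ∈ range N, (-1:ℤ)^j * ((m+1).choose (n+j+2):ℤ))
      = (-1)^(n+2) * (m.choose (n+1) : ℤ) := by
    have hp : (-1:ℤ)^(n+1) = -(-1:ℤ)^(n+2) := by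
      rw [pow_succ]; ring
    rw [hp] at h1
    linarith
  exact mul_left_cancel₀ h5 h6

private lemma rec1 (b m n N : ℕ) :
    ∑ j ∈ range (N+1), (-1:ℤ)^j * ((j+1).choose (b+1) : ℤ) * ((m+1).choose (n+j+2) : ℤ)
      = ∑ j ∈ range (N+1), (-1:ℤ)^j * ((j+1).choose (b+1) : ℤ) * (m.choose (n+j+2) : ℤ)
        + ((1:ℕ).choose (b+1) : ℤ) * (m.choose (n+1) : ℤ)
        - ∑ j ∈ range N, (-1:ℤ)^j * ((j+1).choose (b+1) : ℤ) * (m.choose (n+j+2) : ℤ)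
        - ∑ j ∈ range N, (-1:ℤ)^j * ((j+1).choose b : ℤ) * (m.choose (n+j+2) : ℤ) := by
  have step1 : ∑ j ∈ range (N+1), (-1:ℤ)^j * ((j+1).choose (b+1) : ℤ) * ((m+1).choose (n+j+2) : ℤ)
      = ∑ j ∈ range (N+1), ((-1:ℤ)^j * ((j+1).choose (b+1) : ℤ) * (m.choose (n+j+1) : ℤ)
          + (-1:ℤ)^j * ((j+1).choose (b+1) : ℤ) * (m.choose (n+j+2) : ℤ)) := by
    refine sum_congr rfl fun j _ => ?_
    rw [Nat.choose_succ_succ m (n+j+1)]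
    push_cast
    ring
  rw [step1, sum_add_distrib]
  have step2 : ∑ j ∈ range (N+1), (-1:ℤ)^j * ((j+1).choose (b+1) : ℤ) * (m.choose (n+j+1) : ℤ)
      = (∑ j ∈ range N, (-1:ℤ)^(j+1) * ((j+1+1).choose (b+1) : ℤ) * (m.choose (n+(j+1)+1) : ℤ))
        + (-1:ℤ)^0 * ((0+1).choose (b+1) : ℤ) * (m.choose (n+0+1) : ℤ) :=
    sum_range_succ' _ N
  rw [step2]
  have step3 : ∑ j ∈ range N, (-1:ℤ)^(j+1) * ((j+1+1).choose (b+1) : ℤ) * (m.choose (n+(j+1)+1) : ℤ)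
      = ∑ j ∈ range N, ((0:ℤ) - (-1:ℤ)^j * ((j+1).choose (b+1) : ℤ) * (m.choose (n+j+2) : ℤ)
          - (-1:ℤ)^j * ((j+1).choose b : ℤ) * (m.choose (n+j+2) : ℤ)) := by
    refine sum_congr rfl fun j _ => ?_
    rw [Nat.choose_succ_succ (j+1) b, pow_succ]
    simp only [Nat.succ_eq_add_one]
    push_cast
    ring
  rw [step3, sum_sub_distrib, sum_sub_distrib, sum_const_zero]
  push_cast
  ring

private lemma main (q : ℕ) : ∀ n m N : ℕ, q + 2 ≤ m → m ≤ n + N + 1 →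
    ∑ j ∈ range N, (-1:ℤ)^j * ((j+1).choose (q+1) : ℤ) * (m.choose (n+j+2) : ℤ)
      = (-1)^q * ((m - q - 2).choose n : ℤ) := by
  induction q with
  | zero =>
    intro n m N hm hN
    obtain ⟨m'', rfl⟩ : ∃ k, m = k + 1 + 1 := ⟨m - 2, by omega⟩
    cases N with
    | zero =>
      rw [Nat.choose_eq_zero_of_lt (show m'' + 1 + 1 - 0 - 2 < n by omega)]
      simp
    | succ N' =>
      have r := rec1 0 (m''+1) n N'
      have hb : ∑ j ∈ range (N'+1), (-1:ℤ)^j * ((j+1).choose (0+1) : ℤ) * ((m''+1).choose (n+j+2) : ℤ)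
          = ∑ j ∈ range N', (-1:ℤ)^j * ((j+1).choose (0+1) : ℤ) * ((m''+1).choose (n+j+2) : ℤ) := by
        rw [sum_range_succ, Nat.choose_eq_zero_of_lt (show m''+1 < n+N'+2 by omega)]
        simp
      have hg : ∑ j ∈ range N', (-1:ℤ)^j * ((j+1).choose 0 : ℤ) * ((m''+1).choose (n+j+2) : ℤ)
          = (m''.choose (n+1) : ℤ) := by
        rw [← tail_alt m'' n N' (by omega)]
        refine sum_congr rfl fun j _ => ?_
        rw [Nat.choose_zero_right]
        push_cast
        ring
      rw [r, hb, hg, show m'' + 1 + 1 - 0 - 2 = m'' by omega,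
        Nat.choose_succ_succ m'' n]
      simp only [Nat.succ_eq_add_one, Nat.choose_self]
      push_cast
      ring
  | succ q ih =>
    intro n m N hm hN
    cases N with
    | zero =>
      rw [Nat.choose_eq_zero_of_lt (show m - (q+1) - 2 < n by omega)]
      simp
    | succ N' =>
      obtain ⟨m', rfl⟩ : ∃ k, m = k + 1 := ⟨m - 1, by omega⟩
      have r := rec1 (q+1) m' n N'
      have hb : ∑ j ∈ range (N'+1), (-1:ℤ)^j * ((j+1).choose (q+1+1) : ℤ) * (m'.choose (n+j+2) : ℤ)
          = ∑ j ∈ range N', (-1:ℤ)^j * ((j+1).choose (q+1+1) : ℤ) * (m'.choose (n+j+2) : ℤ) := by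
        rw [sum_range_succ, Nat.choose_eq_zero_of_lt (show m' < n+N'+2 by omega)]
        simp
      have hi := ih n m' N' (by omega) (by omega)
      rw [r, hb, hi, Nat.choose_eq_zero_of_lt (show (1:ℕ) < q+1+1 by omega),
        show m' + 1 - (q+1) - 2 = m' - q - 2 by omega]
      push_cast
      ring

theorem stmt1 (n q m : ℕ) (hm : q + 2 ≤ m) :
    (∑ r ∈ Finset.Icc (n + q) (m - 2),
        (-1 : ℤ) ^ r * (Nat.choose (r - n + 1) (q + 1)) * (Nat.choose m (r + 2)))
      = (-1 : ℤ) ^ (n + q) * (Nat.choose (m - q - 2) n) := by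
  have h1 : (∑ r ∈ Finset.Icc (n + q) (m - 2),
        (-1 : ℤ) ^ r * (Nat.choose (r - n + 1) (q + 1)) * (Nat.choose m (r + 2)))
      = ∑ r ∈ Finset.Icc n (n + m),
        (-1 : ℤ) ^ r * (Nat.choose (r - n + 1) (q + 1)) * (Nat.choose m (r + 2)) := by
    refine sum_subset ?_ ?_
    · intro x hx
      rw [mem_Icc] at *
      omega
    · intro x hx hnx
      rw [mem_Icc] at hx
      rw [mem_Icc] at hnx
      push_neg at hnx
      rcases Nat.lt_or_ge x (n + q) with h | h
      · rw [Nat.choose_eq_zero_of_lt (show x - n + 1 < q + 1 by omega)]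
        simp
      · rw [Nat.choose_eq_zero_of_lt (show m < x + 2 by omega)]
        simp
  rw [h1, ← Finset.Ico_add_one_right_eq_Icc, sum_Ico_eq_sum_range,
    show n + m + 1 - n = m + 1 by omega]
  have h2 : ∑ j ∈ range (m+1),
        (-1 : ℤ) ^ (n + j) * (Nat.choose (n + j - n + 1) (q + 1)) * (Nat.choose m (n + j + 2))
      = (-1:ℤ)^n * ∑ j ∈ range (m+1), (-1:ℤ)^j * ((j+1).choose (q+1) : ℤ) * (m.choose (n+j+2) : ℤ) := by
    rw [mul_sum]
    refine sum_congr rfl fun j _ => ?_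
    rw [Nat.add_sub_cancel_left, pow_add]
    ring
  rw [h2, main q n m (m+1) hm (by omega), pow_add]
  ring
end

section
/- For every natural number i and every real number ξ with |ξ| < 1, (1-ξ)^{-i-1/2} = ∑_{a=0}^{∞} [C(2a+2i, a+i) · C(a+i, i) / (4^a · C(2i, i))] · ξ^a. -/
/-!
By the binomial series, `(1 - ξ) ^ (-a) = ∑ₙ multichoose a n * ξ ^ n` for `|ξ| < 1`, where
`multichoose a n = a (a + 1) ⋯ (a + n - 1) / n!`. For `a = i + 1/2` this coefficient sequence is
pinned down by `c 0 = 1` and `(n + 1) c (n + 1) = (a + n) c n`, and the central-binomial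
expression of the theorem satisfies the same recurrence, by `(m + 1) C(2m+2, m+1) = 2 (2m + 1) C(2m, m)`
and `(n + 1) C(n+i+1, i) = (n + i + 1) C(n+i, i)`.
-/

section Multichoose

variable {K : Type*} [Field K] [CharZero K]

theorem Ring.natCast_add_one_mul_multichoose_succ (a : K) (n : ℕ) :
    ((n : K) + 1) * Ring.multichoose a (n + 1) = (a + n) * Ring.multichoose a n := by
  have h := Ring.factorial_nsmul_multichoose_eq_ascPochhammer a (n + 1)
  have h' := Ring.factorial_nsmul_multichoose_eq_ascPochhammer a n
  rw [Polynomial.ascPochhammer_smeval_eq_eval, ascPochhammer_succ_right, Polynomial.eval_mul] at h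
  rw [Polynomial.ascPochhammer_smeval_eq_eval] at h'
  simp only [nsmul_eq_mul, Nat.factorial_succ, Nat.cast_mul, Polynomial.eval_add,
    Polynomial.eval_X, Polynomial.eval_natCast] at h h'
  rw [← h'] at h
  apply mul_left_cancel₀ (Nat.cast_ne_zero.mpr n.factorial_ne_zero : (n.factorial : K) ≠ 0)
  push_cast at h
  linear_combination h

theorem Ring.eq_multichoose_of_recurrence {a : K} {f : ℕ → K} (h0 : f 0 = 1)
    (hsucc : ∀ n : ℕ, ((n : K) + 1) * f (n + 1) = (a + n) * f n) (n : ℕ) :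
    f n = Ring.multichoose a n := by
  induction n with
  | zero => rw [h0, Ring.multichoose_zero_right]
  | succ n ih =>
    apply mul_left_cancel₀ (by exact_mod_cast n.succ_ne_zero : (n : K) + 1 ≠ 0)
    rw [hsucc, ih, Ring.natCast_add_one_mul_multichoose_succ]

end Multichoose

theorem Nat.succ_mul_choose_succ_add (n i : ℕ) :
    (n + 1) * (n + 1 + i).choose i = (n + i + 1) * (n + i).choose i := by
  have h := Nat.choose_mul_succ_eq (n + i) i
  rw [show n + i + 1 - i = n + 1 by omega, show n + i + 1 = n + 1 + i by omega] at h
  linarith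

theorem Ring.multichoose_natCast_add_half (i n : ℕ) :
    Ring.multichoose ((i : ℝ) + 1 / 2) n =
      ((n + i).centralBinom * (n + i).choose i : ℝ) / (4 ^ n * i.centralBinom) := by
  refine (Ring.eq_multichoose_of_recurrence
    (f := fun n ↦ ((n + i).centralBinom * (n + i).choose i : ℝ) / (4 ^ n * i.centralBinom))
    ?_ (fun n ↦ ?_) n).symm
  · simp [(Nat.centralBinom_pos i).ne']
  · have hcb : ((n + i : ℕ) + 1 : ℝ) * (n + 1 + i).centralBinom =
        2 * (2 * (n + i : ℕ) + 1) * (n + i).centralBinom := by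
      rw [show n + 1 + i = n + i + 1 by omega]
      exact_mod_cast Nat.succ_mul_centralBinom_succ (n + i)
    have hch : ((n : ℝ) + 1) * (n + 1 + i).choose i = ((n + i : ℕ) + 1) * (n + i).choose i := by
      exact_mod_cast Nat.succ_mul_choose_succ_add n i
    have hcb0 : (i.centralBinom : ℝ) ≠ 0 := by exact_mod_cast (Nat.centralBinom_pos i).ne'
    have hm : ((n + i : ℕ) : ℝ) + 1 ≠ 0 := by positivity
    rw [pow_succ]
    field_simp
    apply mul_left_cancel₀ hm
    push_cast at hcb hch ⊢
    linear_combination 2 * ((n + i : ℝ) + 1) * (n + 1 + i).centralBinom * hch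
      + 2 * ((n + i : ℝ) + 1) * (n + i).choose i * hcb

theorem Real.hasSum_multichoose_mul_pow (a : ℝ) {x : ℝ} (hx : |x| < 1) :
    HasSum (fun n ↦ Ring.multichoose a n * x ^ n) ((1 - x) ^ (-a)) := by
  have h := (one_div_one_sub_rpow_hasFPowerSeriesOnBall_zero a).hasSum
    (y := x) (by simpa [enorm_eq_nnnorm, ← NNReal.coe_lt_one] using hx)
  simpa [FormalMultilinearSeries.ofScalars_apply_eq, Ring.multichoose_eq,
    Real.rpow_neg (by grind : 0 ≤ 1 - x), mul_comm] using h

theorem stmt5 (i : ℕ) (ξ : ℝ) (hξ : |ξ| < 1) :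
    (1 - ξ) ^ (-((i : ℝ) + 1 / 2)) =
      ∑' a : ℕ,
        ((Nat.choose (2 * a + 2 * i) (a + i) * Nat.choose (a + i) i : ℝ) /
            (4 ^ a * Nat.choose (2 * i) i)) * ξ ^ a := by
  have hcoeff (a : ℕ) : ((Nat.choose (2 * a + 2 * i) (a + i) * Nat.choose (a + i) i : ℝ) /
      (4 ^ a * Nat.choose (2 * i) i)) = Ring.multichoose ((i : ℝ) + 1 / 2) a := by
    rw [Ring.multichoose_natCast_add_half, Nat.centralBinom_eq_two_mul_choose,
      Nat.centralBinom_eq_two_mul_choose, mul_add]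
  simp_rw [hcoeff]
  exact (Real.hasSum_multichoose_mul_pow _ hξ).tsum_eq.symm
end

section
/- Define sn(λ, r) := ∑_{k=0}^{∞} (-λ)^k · r^{2k+1}/(2k+1)! and cs(λ, r) := ∑_{k=0}^{∞} (-λ)^k · r^{2k}/(2k)! for real λ and r. Then for all real λ and r, cs(λ, r)² + λ · sn(λ, r)² = 1. -/
theorem stmt9 (sn cs : ℝ → ℝ → ℝ)
    (hsn : ∀ lam r : ℝ, sn lam r =
      ∑' k : ℕ, (-lam) ^ k * r ^ (2 * k + 1) / (Nat.factorial (2 * k + 1)))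
    (hcs : ∀ lam r : ℝ, cs lam r =
      ∑' k : ℕ, (-lam) ^ k * r ^ (2 * k) / (Nat.factorial (2 * k)))
    (lam r : ℝ) :
    cs lam r ^ 2 + lam * sn lam r ^ 2 = 1 := by
  obtain ⟨μ, hμ⟩ : ∃ μ : ℂ, μ ^ 2 = (lam : ℂ) := by
    rcases le_or_gt 0 lam with h | h
    · exact ⟨Real.sqrt lam, by rw [← Complex.ofReal_pow, Real.sq_sqrt h]⟩
    · refine ⟨Real.sqrt (-lam) * Complex.I, ?_⟩
      rw [mul_pow, Complex.I_sq, ← Complex.ofReal_pow, Real.sq_sqrt (by linarith)]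
      push_cast; ring
  have hc : (cs lam r : ℂ) = Complex.cos (μ * r) := by
    rw [hcs, Complex.ofReal_tsum, Complex.cos_eq_tsum]
    congr 1; funext k
    push_cast
    rw [mul_pow, pow_mul μ, hμ, neg_pow]
    ring
  have hs : (sn lam r : ℂ) * μ = Complex.sin (μ * r) := by
    rw [hsn, Complex.ofReal_tsum, ← tsum_mul_right, Complex.sin_eq_tsum]
    congr 1; funext k
    push_cast
    rw [mul_pow, pow_succ μ (2 * k), pow_mul μ, hμ, neg_pow]
    ring
  have key : (cs lam r : ℂ) ^ 2 + (lam : ℂ) * (sn lam r : ℂ) ^ 2 = 1 := by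
    have h1 := Complex.sin_sq_add_cos_sq (μ * r)
    calc (cs lam r : ℂ) ^ 2 + (lam : ℂ) * (sn lam r : ℂ) ^ 2
        = Complex.sin (μ * r) ^ 2 + Complex.cos (μ * r) ^ 2 := by
          rw [hc, ← hs, ← hμ]; ring
      _ = 1 := h1
  exact_mod_cast key
end
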